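/- arXiv:1802.01792 — 2 statements merged into one kernel-verified Lean document; each statement's English description precedes it below -/
import Mathlib

section
/- Let W be the Weyl group of a simply-laced root system and fix a fundamental weight ϖⱼ. Call an expression s_{i_m}⋯s_{i_1} of an element w ∈ W j-admissible if ⟨α_{i_a}, s_{i_{a-1}}⋯s_{i_1}ϖⱼ⟩ ≥ 0 for all a ≤ m. Then every reduced expression of every element w ∈ W is j-admissible. -/
set_option linter.unusedSectionVars false
set_option maxHeartbeats 1000000


/- Weights of a simply-laced root system are encoded by their coordinates in the basis of
fundamental weights: `γ : I → ℤ`, `γ i = ⟨γ, α̌ᵢ⟩`.  `A` is the (symmetric, simply-laced)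
Cartan matrix and `reflS A i` is the simple reflection `sᵢ`.  A word `[i₁, …, i_m]`
represents the expression `s_{i_m} ⋯ s_{i_1}` (applied rightmost first). -/

/-- The simple reflection `sᵢ` acting on weights. -/
def reflS {I : Type*} (A : I → I → ℤ) (i : I) (γ : I → ℤ) : I → ℤ :=
  fun j => γ j - γ i * A i j

/-- The fundamental weight `ϖᵢ`. -/
def fw {I : Type*} [DecidableEq I] (i : I) : I → ℤ :=
  fun j => if j = i then 1 else 0

/-- Action of the word `[i₁, …, i_m]`, i.e. of `s_{i_m} ⋯ s_{i_1}`, on a weight. -/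
def wordAct {I : Type*} (A : I → I → ℤ) (w : List I) (γ : I → ℤ) : I → ℤ :=
  w.foldl (fun δ i => reflS A i δ) γ

/-- A word `[i₁, …, i_m]` (for `s_{i_m} ⋯ s_{i_1}`) is `j`-admissible if
`⟨α_{i_a}, s_{i_{a-1}} ⋯ s_{i_1} ϖ_j⟩ ≥ 0` for all `a ≤ m`. -/
def Admissible {I : Type*} [DecidableEq I] (A : I → I → ℤ) (j : I) (w : List I) : Prop :=
  ∀ (a : ℕ) (h : a < w.length), 0 ≤ wordAct A (w.take a) (fw j) (w.get ⟨a, h⟩)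

/-- A word is reduced if no shorter word induces the same action on all weights. -/
def IsReducedWord {I : Type*} (A : I → I → ℤ) (w : List I) : Prop :=
  ∀ w' : List I, (∀ γ : I → ℤ, wordAct A w' γ = wordAct A w γ) → w.length ≤ w'.length

section Aux

variable {I : Type*} [Fintype I] [DecidableEq I]

/-- The simple reflection acting on root coordinates. -/
def rootRefl (A : I → I → ℤ) (i : I) (c : I → ℤ) : I → ℤ :=
  fun k => c k - (∑ m, c m * A m i) * fw i k

/-- The pairing between root coordinates and weight coordinates. -/
def pairRW (c γ : I → ℤ) : ℤ := ∑ k, c k * γ k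

lemma sum_fw (i : I) (h : I → ℤ) : ∑ m, fw i m * h m = h i := by
  simp [fw, ite_mul]

lemma pairRW_fw_right (c : I → ℤ) (j : I) : pairRW c (fw j) = c j := by
  simp [pairRW, fw, mul_ite]

lemma pairRW_fw_left (γ : I → ℤ) (j : I) : pairRW (fw j) γ = γ j := sum_fw j γ

lemma pairRW_inj {c c' : I → ℤ} (h : ∀ γ, pairRW c γ = pairRW c' γ) : c = c' := by
  funext j
  simpa [pairRW_fw_right] using h (fw j)

lemma pairRW_add_left (c c' γ : I → ℤ) :
    pairRW (c + c') γ = pairRW c γ + pairRW c' γ := by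
  simp [pairRW, add_mul, Finset.sum_add_distrib]

lemma pairRW_adj (A : I → I → ℤ) (hsym : ∀ i j, A i j = A j i) (i : I) (c γ : I → ℤ) :
    pairRW (rootRefl A i c) γ = pairRW c (reflS A i γ) := by
  unfold pairRW rootRefl reflS
  simp only [sub_mul, mul_sub, Finset.sum_sub_distrib]
  congr 1
  have h1 : ∀ k, (∑ m, c m * A m i) * fw i k * γ k
      = fw i k * ((∑ m, c m * A m i) * γ k) := by intro k; ring
  have h2 : ∀ k, c k * (γ i * A i k) = γ i * (c k * A k i) := by
    intro k; rw [hsym i k]; ring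
  rw [Finset.sum_congr rfl (fun k _ => h1 k), sum_fw,
    Finset.sum_congr rfl (fun k _ => h2 k), ← Finset.mul_sum]
  ring

/-- The Coxeter matrix attached to the simply-laced Cartan matrix `A`. -/
def CMat (A : I → I → ℤ) (hsym : ∀ i j, A i j = A j i) : CoxeterMatrix I where
  M := Matrix.of fun i j => if i = j then 1 else if A i j = 0 then 2 else 3
  isSymm := by
    ext i j
    simp only [Matrix.transpose_apply, Matrix.of_apply]
    rcases eq_or_ne i j with rfl | h
    · rfl
    · simp [h, h.symm, hsym i j]
  diagonal i := by simp
  off_diagonal i i' h := by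
    simp only [Matrix.of_apply, h, if_false]
    split_ifs <;> omega

lemma CMat_eq_two (A : I → I → ℤ) (hsym : ∀ i j, A i j = A j i) {i i' : I}
    (h : i ≠ i') (h0 : A i i' = 0) : CMat A hsym i i' = 2 := by
  simp [CMat, h, h0]

lemma CMat_eq_three (A : I → I → ℤ) (hsym : ∀ i j, A i j = A j i) {i i' : I}
    (h : i ≠ i') (h0 : A i i' ≠ 0) : CMat A hsym i i' = 3 := by
  simp [CMat, h, h0]

/-- The weight reflection as an endomorphism. -/
def wtEnd (A : I → I → ℤ) (i : I) : Function.End (I → ℤ) := reflS A i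

/-- The root reflection as an endomorphism. -/
def rtEnd (A : I → I → ℤ) (i : I) : Function.End (I → ℤ) := rootRefl A i

/-- The weight reflections are liftable to the Coxeter group. -/
lemma wt_liftable (A : I → I → ℤ) (hdiag : ∀ i, A i i = 2) (hsym : ∀ i j, A i j = A j i)
    (hoff : ∀ i j, i ≠ j → A i j = 0 ∨ A i j = -1) :
    CoxeterMatrix.IsLiftable (CMat A hsym)
      (fun i => wtEnd A i) := by
  intro i i'
  rcases eq_or_ne i i' with rfl | hne
  · rw [(CMat A hsym).diagonal i, pow_one]
    funext γ k
    show reflS A i (reflS A i γ) k = γ k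
    simp only [reflS]
    rw [hdiag i]; ring
  · have hsy := hsym i i'
    rcases hoff i i' hne with h0 | h1
    · rw [CMat_eq_two A hsym hne h0, pow_two]
      have h0' : A i' i = 0 := by rw [← hsy, h0]
      funext γ k
      show reflS A i (reflS A i' (reflS A i (reflS A i' γ))) k = γ k
      simp only [reflS]
      rw [hdiag i, hdiag i', h0, h0']; ring
    · have h0 : A i i' = -1 := h1
      have h0' : A i' i = -1 := by rw [← hsy, h0]
      rw [CMat_eq_three A hsym hne (by rw [h0]; decide), pow_succ, pow_two]
      funext γ k
      show reflS A i (reflS A i' (reflS A i (reflS A i' (reflS A i (reflS A i' γ))))) k = γ k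
      simp only [reflS]
      rw [hdiag i, hdiag i', h0, h0']; ring

lemma End_mul_apply {α : Type*} (x y : Function.End α) (a : α) : (x * y) a = x (y a) := rfl

/-- The root reflections are liftable to the Coxeter group. -/
lemma rt_liftable (A : I → I → ℤ) (hdiag : ∀ i, A i i = 2) (hsym : ∀ i j, A i j = A j i)
    (hoff : ∀ i j, i ≠ j → A i j = 0 ∨ A i j = -1) :
    CoxeterMatrix.IsLiftable (CMat A hsym) (fun i => rtEnd A i) := by
  have hw := wt_liftable A hdiag hsym hoff
  intro i i'
  rcases eq_or_ne i i' with rfl | hne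
  · rw [(CMat A hsym).diagonal i, pow_one]
    funext c
    apply pairRW_inj; intro γ
    show pairRW (rootRefl A i (rootRefl A i c)) γ = pairRW c γ
    rw [pairRW_adj A hsym, pairRW_adj A hsym]
    have h1 := hw i i
    rw [(CMat A hsym).diagonal i, pow_one] at h1
    have h2 : reflS A i (reflS A i γ) = γ := congrFun h1 γ
    rw [h2]
  · have hsy := hsym i i'
    rcases hoff i i' hne with h0 | h1
    · have h0' : A i' i = 0 := by rw [hsym i' i, h0]
      rw [CMat_eq_two A hsym hne h0, pow_two]
      funext c
      apply pairRW_inj; intro γ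
      show pairRW (rootRefl A i (rootRefl A i' (rootRefl A i (rootRefl A i' c)))) γ = pairRW c γ
      rw [pairRW_adj A hsym, pairRW_adj A hsym, pairRW_adj A hsym, pairRW_adj A hsym]
      have h1 := hw i' i
      rw [CMat_eq_two A hsym hne.symm h0', pow_two] at h1
      have h2 : reflS A i' (reflS A i (reflS A i' (reflS A i γ))) = γ := congrFun h1 γ
      rw [h2]
    · have h1' : A i' i = -1 := by rw [hsym i' i, h1]
      rw [CMat_eq_three A hsym hne (by rw [h1]; decide), pow_succ, pow_two]
      funext c
      apply pairRW_inj; intro γ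
      show pairRW (rootRefl A i (rootRefl A i' (rootRefl A i (rootRefl A i'
        (rootRefl A i (rootRefl A i' c)))))) γ = pairRW c γ
      rw [pairRW_adj A hsym, pairRW_adj A hsym, pairRW_adj A hsym, pairRW_adj A hsym,
        pairRW_adj A hsym, pairRW_adj A hsym]
      have hh := hw i' i
      rw [CMat_eq_three A hsym hne.symm (by rw [h1']; decide), pow_succ, pow_two] at hh
      have h2 : reflS A i' (reflS A i (reflS A i' (reflS A i (reflS A i' (reflS A i γ))))) = γ :=
        congrFun hh γ
      rw [h2]

/-- The Coxeter system attached to `A`. -/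
def cox (A : I → I → ℤ) (hsym : ∀ i j, A i j = A j i) :
    CoxeterSystem (CMat A hsym) (CMat A hsym).Group :=
  CoxeterMatrix.toCoxeterSystem _

variable (A : I → I → ℤ) (hdiag : ∀ i, A i i = 2) (hsym : ∀ i j, A i j = A j i)
  (hoff : ∀ i j, i ≠ j → A i j = 0 ∨ A i j = -1)

/-- The weight representation. -/
def wtHom : (CMat A hsym).Group →* Function.End (I → ℤ) :=
  (cox A hsym).lift ⟨fun i => wtEnd A i, wt_liftable A hdiag hsym hoff⟩

/-- The root representation. -/
def rtHom : (CMat A hsym).Group →* Function.End (I → ℤ) :=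
  (cox A hsym).lift ⟨fun i => rtEnd A i, rt_liftable A hdiag hsym hoff⟩

lemma wtHom_simple (i : I) : wtHom A hdiag hsym hoff ((cox A hsym).simple i) = wtEnd A i :=
  (cox A hsym).lift_apply_simple _ i

lemma rtHom_simple (i : I) : rtHom A hdiag hsym hoff ((cox A hsym).simple i) = rtEnd A i :=
  (cox A hsym).lift_apply_simple _ i

lemma pairRW_adj_w (v : (CMat A hsym).Group) (c γ : I → ℤ) :
    pairRW (rtHom A hdiag hsym hoff v c) γ = pairRW c (wtHom A hdiag hsym hoff v⁻¹ γ) := by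
  induction v using CoxeterSystem.simple_induction (cs := cox A hsym) generalizing c γ with
  | simple i =>
      rw [(cox A hsym).inv_simple, rtHom_simple, wtHom_simple]
      exact pairRW_adj A hsym i c γ
  | one => simp only [map_one, inv_one]; rfl
  | mul w w' hw hw' =>
      rw [map_mul, End_mul_apply, hw, hw', mul_inv_rev, map_mul, End_mul_apply]

lemma rtHom_add (v : (CMat A hsym).Group) (c c' : I → ℤ) :
    rtHom A hdiag hsym hoff v (c + c') = rtHom A hdiag hsym hoff v c
      + rtHom A hdiag hsym hoff v c' := by
  apply pairRW_inj; intro γ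
  rw [pairRW_add_left, pairRW_adj_w, pairRW_adj_w, pairRW_adj_w, pairRW_add_left]

lemma simple_comm {i i' : I} (hM : CMat A hsym i i' = 2) :
    (cox A hsym).simple i * (cox A hsym).simple i'
      = (cox A hsym).simple i' * (cox A hsym).simple i := by
  have h := (cox A hsym).simple_mul_simple_pow i i'
  rw [hM, pow_two] at h
  have h2 := eq_inv_of_mul_eq_one_left h
  rw [h2, mul_inv_rev, (cox A hsym).inv_simple, (cox A hsym).inv_simple]

lemma simple_braid {i i' : I} (hM : CMat A hsym i i' = 3) :
    (cox A hsym).simple i' * (cox A hsym).simple i * (cox A hsym).simple i'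
      = (cox A hsym).simple i * (cox A hsym).simple i' * (cox A hsym).simple i := by
  have h := (cox A hsym).simple_mul_simple_pow i i'
  rw [hM, pow_succ, pow_two] at h
  have h2 : ((cox A hsym).simple i * (cox A hsym).simple i' * (cox A hsym).simple i) *
      ((cox A hsym).simple i' * (cox A hsym).simple i * (cox A hsym).simple i') = 1 := by
    rw [← h]; group
  have h3 := eq_inv_of_mul_eq_one_left h2
  rw [h3, mul_inv_rev, mul_inv_rev, (cox A hsym).inv_simple, (cox A hsym).inv_simple,
    mul_assoc]

lemma rootRefl_fw_zero {i i' : I} (h0 : A i i' = 0) : rootRefl A i' (fw i) = fw i := by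
  funext k
  simp only [rootRefl, sum_fw, h0]
  ring

lemma rootRefl_fw_neg {i i' : I} (h0 : A i i' = -1) : rootRefl A i' (fw i) = fw i + fw i' := by
  funext k
  simp only [rootRefl, sum_fw, h0, Pi.add_apply]
  ring

include hdiag in
lemma rootRefl_add_fw {i i' : I} (h0' : A i' i = -1) :
    rootRefl A i (fw i + fw i') = fw i' := by
  funext k
  simp only [rootRefl, Pi.add_apply]
  have hs : (∑ m, (fw i m + fw i' m) * A m i) = A i i + A i' i := by
    simp only [add_mul, Finset.sum_add_distrib, sum_fw]
  rw [hs, hdiag i, h0']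
  ring

include hdiag hoff in
/-- Key theorem: if `ℓ(w sᵢ) > ℓ(w)` then the root `w αᵢ` is nonnegative. -/
theorem rt_pos : ∀ (n : ℕ) (w : (CMat A hsym).Group) (i : I),
    (cox A hsym).length w = n →
    (cox A hsym).length w < (cox A hsym).length (w * (cox A hsym).simple i) →
    ∀ k, 0 ≤ rtHom A hdiag hsym hoff w (fw i) k := by
  intro n
  induction n using Nat.strong_induction_on with
  | _ n IH =>
  intro w i hn hlt k
  rcases eq_or_ne w 1 with rfl | hw1
  · rw [map_one]
    show (0 : ℤ) ≤ fw i k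
    unfold fw
    split_ifs <;> norm_num
  · obtain ⟨i', hd⟩ := (cox A hsym).exists_rightDescent_of_ne_one hw1
    have hdlt : (cox A hsym).length (w * (cox A hsym).simple i') < (cox A hsym).length w := hd
    set u := w * (cox A hsym).simple i' with hu
    have hwu : w = u * (cox A hsym).simple i' := by
      rw [hu, (cox A hsym).simple_mul_simple_cancel_right]
    have hlu : (cox A hsym).length u + 1 = (cox A hsym).length w := by
      have h := (cox A hsym).length_mul_simple w i'
      rw [← hu] at h
      rcases h with h | h <;> omega
    have hne : i ≠ i' := by
      rintro rfl
      rw [← hu] at hlt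
      omega
    have hub : ∀ (v : (CMat A hsym).Group) (l : I),
        (cox A hsym).length (v * (cox A hsym).simple l) ≤ (cox A hsym).length v + 1 := by
      intro v l
      have := (cox A hsym).length_mul_le v ((cox A hsym).simple l)
      simpa [(cox A hsym).length_simple] using this
    rcases hoff i i' hne with h0 | h1
    · -- commuting case
      have h0' : A i' i = 0 := by rw [hsym i' i, h0]
      have hM : CMat A hsym i i' = 2 := CMat_eq_two A hsym hne h0
      have hcomm := simple_comm A hsym hM
      have hkey : (cox A hsym).length u < (cox A hsym).length (u * (cox A hsym).simple i) := by
        by_contra hcon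
        push_neg at hcon
        have h5 : (cox A hsym).length (u * (cox A hsym).simple i) + 1
            = (cox A hsym).length u := by
          rcases (cox A hsym).length_mul_simple u i with h | h <;> omega
        have hws : w * (cox A hsym).simple i
            = u * (cox A hsym).simple i * (cox A hsym).simple i' := by
          calc w * (cox A hsym).simple i
              = u * (cox A hsym).simple i' * (cox A hsym).simple i := by rw [← hwu]
            _ = u * ((cox A hsym).simple i' * (cox A hsym).simple i) := by rw [mul_assoc]
            _ = u * ((cox A hsym).simple i * (cox A hsym).simple i') := by rw [← hcomm]
            _ = u * (cox A hsym).simple i * (cox A hsym).simple i' := by rw [← mul_assoc]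
        have h6 := hub (u * (cox A hsym).simple i) i'
        rw [← hws] at h6
        omega
      have hiu : rtHom A hdiag hsym hoff w (fw i) = rtHom A hdiag hsym hoff u (fw i) := by
        rw [hwu, map_mul, End_mul_apply, rtHom_simple]
        rw [show rtEnd A i' (fw i) = fw i from rootRefl_fw_zero A h0]
      rw [hiu]
      exact IH ((cox A hsym).length u) (by omega) u i rfl hkey k
    · -- braid case
      have h1' : A i' i = -1 := by rw [hsym i' i, h1]
      have hM : CMat A hsym i i' = 3 := CMat_eq_three A hsym hne (by rw [h1]; decide)
      have hw_eq : rtHom A hdiag hsym hoff w (fw i)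
          = rtHom A hdiag hsym hoff u (fw i) + rtHom A hdiag hsym hoff u (fw i') := by
        rw [hwu, map_mul, End_mul_apply, rtHom_simple]
        rw [show rtEnd A i' (fw i) = fw i + fw i' from rootRefl_fw_neg A h1]
        exact rtHom_add A hdiag hsym hoff u (fw i) (fw i')
      rcases Nat.lt_or_ge ((cox A hsym).length u)
          ((cox A hsym).length (u * (cox A hsym).simple i)) with hui | hui
      · have p1 := IH ((cox A hsym).length u) (by omega) u i rfl hui k
        have hus' : (cox A hsym).length u
            < (cox A hsym).length (u * (cox A hsym).simple i') := by
          rw [← hwu]; omega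
        have p2 := IH ((cox A hsym).length u) (by omega) u i' rfl hus' k
        rw [hw_eq]
        have : (rtHom A hdiag hsym hoff u (fw i) + rtHom A hdiag hsym hoff u (fw i')) k
            = rtHom A hdiag hsym hoff u (fw i) k + rtHom A hdiag hsym hoff u (fw i') k :=
          Pi.add_apply _ _ _
        rw [this]
        linarith
      · have h5 : (cox A hsym).length (u * (cox A hsym).simple i) + 1
            = (cox A hsym).length u := by
          rcases (cox A hsym).length_mul_simple u i with h | h <;> omega
        set u' := u * (cox A hsym).simple i with hu'
        have hu'u : u = u' * (cox A hsym).simple i := by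
          rw [hu', (cox A hsym).simple_mul_simple_cancel_right]
        have hbraid := simple_braid A hsym hM
        have hkey : (cox A hsym).length u'
            < (cox A hsym).length (u' * (cox A hsym).simple i') := by
          by_contra hcon
          push_neg at hcon
          have h6 : (cox A hsym).length (u' * (cox A hsym).simple i') + 1
              = (cox A hsym).length u' := by
            rcases (cox A hsym).length_mul_simple u' i' with h | h <;> omega
          set u'' := u' * (cox A hsym).simple i' with hu''
          have hu''e : u' = u'' * (cox A hsym).simple i' := by
            rw [hu'', (cox A hsym).simple_mul_simple_cancel_right]
          have hws : w * (cox A hsym).simple i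
              = u'' * (cox A hsym).simple i * (cox A hsym).simple i' := by
            rw [hwu, hu'u, hu''e]
            have hb2 : (cox A hsym).simple i' * ((cox A hsym).simple i *
                ((cox A hsym).simple i' * (cox A hsym).simple i))
                = (cox A hsym).simple i * (cox A hsym).simple i' := by
              have : (cox A hsym).simple i' * (cox A hsym).simple i * (cox A hsym).simple i'
                  * (cox A hsym).simple i = (cox A hsym).simple i * (cox A hsym).simple i'
                  * ((cox A hsym).simple i * (cox A hsym).simple i) := by
                rw [hbraid, mul_assoc]
              rw [(cox A hsym).simple_mul_simple_self, mul_one] at this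
              rw [← this]
              group
            calc u'' * (cox A hsym).simple i' * (cox A hsym).simple i
                * (cox A hsym).simple i' * (cox A hsym).simple i
                = u'' * ((cox A hsym).simple i' * ((cox A hsym).simple i *
                  ((cox A hsym).simple i' * (cox A hsym).simple i))) := by group
              _ = u'' * ((cox A hsym).simple i * (cox A hsym).simple i') := by rw [hb2]
              _ = u'' * (cox A hsym).simple i * (cox A hsym).simple i' := by group
          have h7 := hub (u'' * (cox A hsym).simple i) i'
          have h8 := hub u'' i
          rw [← hws] at h7
          omega
        have hval : rtHom A hdiag hsym hoff w (fw i)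
            = rtHom A hdiag hsym hoff u' (fw i') := by
          rw [hwu, map_mul, End_mul_apply, rtHom_simple]
          rw [show rtEnd A i' (fw i) = fw i + fw i' from rootRefl_fw_neg A h1]
          rw [hu'u, map_mul, End_mul_apply, rtHom_simple]
          rw [show rtEnd A i (fw i + fw i') = fw i' from rootRefl_add_fw A hdiag h1']
        rw [hval]
        exact IH ((cox A hsym).length u') (by omega) u' i' rfl hkey k

include hdiag hoff in
lemma wordAct_eq_wtHom (l : List I) (γ : I → ℤ) :
    wordAct A l γ = wtHom A hdiag hsym hoff ((cox A hsym).wordProd l.reverse) γ := by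
  induction l generalizing γ with
  | nil =>
      rw [List.reverse_nil, (cox A hsym).wordProd_nil, map_one]
      rfl
  | cons i l ih =>
      have h1 : wordAct A (i :: l) γ = wordAct A l (reflS A i γ) := rfl
      rw [h1, ih]
      rw [List.reverse_cons, ← List.concat_eq_append, (cox A hsym).wordProd_concat,
        map_mul, End_mul_apply, wtHom_simple]
      rfl

include hdiag hoff in
lemma isReduced_of_isReducedWord (w : List I) (hw : IsReducedWord A w) :
    (cox A hsym).IsReduced w.reverse := by
  unfold CoxeterSystem.IsReduced
  rw [List.length_reverse]
  by_contra hlt'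
  have hle := (cox A hsym).length_wordProd_le w.reverse
  rw [List.length_reverse] at hle
  have hlt : (cox A hsym).length ((cox A hsym).wordProd w.reverse) < w.length :=
    lt_of_le_of_ne hle hlt'
  obtain ⟨ω, hω, hprod⟩ :=
    (cox A hsym).exists_reduced_word' ((cox A hsym).wordProd w.reverse)
  have heq : ∀ γ, wordAct A ω.reverse γ = wordAct A w γ := by
    intro γ
    rw [wordAct_eq_wtHom A hdiag hsym hoff, wordAct_eq_wtHom A hdiag hsym hoff,
      List.reverse_reverse, ← hprod]
  have h2 := hw ω.reverse heq
  rw [List.length_reverse] at h2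
  unfold CoxeterSystem.IsReduced at hω
  rw [← hprod] at hω
  omega

end Aux

/-- In the Weyl group of a simply-laced root system, every reduced
expression of every element is `j`-admissible. -/
theorem stmt_3 {I : Type*} [Fintype I] [DecidableEq I] (A : I → I → ℤ)
    (hdiag : ∀ i, A i i = 2) (hsym : ∀ i j, A i j = A j i)
    (hoff : ∀ i j, i ≠ j → A i j = 0 ∨ A i j = -1)
    (j : I) (w : List I) (hw : IsReducedWord A w) :
    Admissible A j w := by

  have hred : (cox A hsym).IsReduced w.reverse :=
    isReduced_of_isReducedWord A hdiag hsym hoff w hw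
  have hq : (cox A hsym).IsReduced w := ((cox A hsym).isReduced_reverse_iff w).mp hred
  intro a ha
  set x := w.get ⟨a, ha⟩ with hx
  -- express the pairing through the root representation
  rw [wordAct_eq_wtHom A hdiag hsym hoff]
  set u := (cox A hsym).wordProd (w.take a).reverse with hu
  have hval : wtHom A hdiag hsym hoff u (fw j) x
      = rtHom A hdiag hsym hoff u⁻¹ (fw x) j := by
    have h1 := pairRW_fw_left (wtHom A hdiag hsym hoff u (fw j)) x
    have h2 := pairRW_adj_w A hdiag hsym hoff u⁻¹ (fw x) (fw j)
    rw [inv_inv] at h2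
    rw [← h1, ← h2, pairRW_fw_right]
  rw [hval]
  -- length facts
  have hinv : u⁻¹ = (cox A hsym).wordProd (w.take a) := by
    rw [hu, (cox A hsym).wordProd_reverse, inv_inv]
  have hlen_u : (cox A hsym).length u⁻¹ = a := by
    rw [hinv]
    have := hq.take a
    unfold CoxeterSystem.IsReduced at this
    rw [this, List.length_take]
    omega
  have htake : w.take a ++ [x] = w.take (a + 1) := by
    rw [hx, List.get_eq_getElem]
    exact List.take_concat_get' w a ha
  have hmul : u⁻¹ * (cox A hsym).simple x = (cox A hsym).wordProd (w.take (a + 1)) := by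
    rw [hinv, ← (cox A hsym).wordProd_singleton, ← (cox A hsym).wordProd_append, htake]
  have hlen_m : (cox A hsym).length (u⁻¹ * (cox A hsym).simple x) = a + 1 := by
    rw [hmul]
    have := hq.take (a + 1)
    unfold CoxeterSystem.IsReduced at this
    rw [this, List.length_take]
    omega
  exact rt_pos A hdiag hsym hoff a u⁻¹ x hlen_u (by omega) j
end

section
/- Let Q be a type A Dynkin quiver with linearly ordered vertices and all arrows in the same direction, let M be a representation of Q with underlying nilpotent operator φ on V = ⊕Mᵢ, and let (v₁,…,v_d) be a point of a cell C_α^φ of the φ-fixed locus of the Grassmannian with each vᵢ = eᵢ + Σ_{j≠i} xᵢ(j)eⱼ in echelon form with respect to the Jordan basis {eⱼ}. If span(v₁,…,v_d) is a subrepresentation (i.e. a direct sum of graded pieces Nᵢ ⊆ Mᵢ), then each vᵢ lies in a single graded piece M_{t(i)}; conversely if each vᵢ lies in some M_t then span(v₁,…,v_d) is a subrepresentation. -/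
/-! An independent grading `M` for which the basis `e` is homogeneous is recovered from the basis:
`M r` is spanned by the basis vectors of degree `r`, so membership in `M r` is read off the
coordinates. If `v` is in echelon form, a vector of `span v` is determined by its pivot coordinates.
Given a decomposition `vᵢ = ∑ₛ wₛ` with `wₛ ∈ span v ⊓ M s`, the homogeneous component of degree
`g (pivot i)` has the same pivot coordinates as `vᵢ` (at the other pivots both vanish by degree), so
it equals `vᵢ`. -/

open Submodule

namespace Module.Basis

variable {R V ι κ : Type*} [Ring R] [AddCommGroup V] [Module R V]
  {M : κ → Submodule R V} (e : Basis ι R V) {g : ι → κ}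

theorem eq_span_image_fiber (hM : iSupIndep M) (he : ∀ j, e j ∈ M (g j)) (r : κ) :
    M r = span R (e '' (g ⁻¹' {r})) := by
  have hle : (fun s => span R (e '' (g ⁻¹' {s}))) ≤ M := fun s =>
    span_le.mpr <| by rintro _ ⟨j, rfl, rfl⟩; exact he j
  have htop : (⨆ s, span R (e '' (g ⁻¹' {s}))) = ⊤ := by
    rw [eq_top_iff, ← e.span_eq, span_le]
    rintro _ ⟨j, rfl⟩
    exact mem_iSup_of_mem (g j) (subset_span ⟨j, rfl, rfl⟩)
  exact congrFun ((hM.le_iff_eq_of_iSup_eq_top htop).mp hle).symm r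

theorem repr_eq_zero_of_mem_of_ne (hM : iSupIndep M) (he : ∀ j, e j ∈ M (g j)) {r : κ}
    {w : V} (hw : w ∈ M r) {j : ι} (hj : g j ≠ r) : e.repr w j = 0 := by
  rw [e.eq_span_image_fiber hM he, mem_span_image] at hw
  by_contra h
  exact hj (hw (Finsupp.mem_support_iff.mpr h))

theorem repr_finsuppSum_apply_of_mem (hM : iSupIndep M) (he : ∀ j, e j ∈ M (g j))
    (f : κ →₀ V) (hf : ∀ s, f s ∈ M s) (j : ι) :
    e.repr (f.sum fun _ w => w) j = e.repr (f (g j)) j := by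
  rw [Finsupp.sum, map_sum, Finset.sum_apply']
  refine Finset.sum_eq_single _ (fun s _ hs => ?_) fun hj => ?_
  · exact e.repr_eq_zero_of_mem_of_ne hM he (hf s) fun h => hs h.symm
  · rw [Finsupp.notMem_support_iff.mp hj, map_zero, Finsupp.zero_apply]

section Echelon

variable {δ : Type*} [Fintype δ] [DecidableEq δ] {v : δ → V} {pivot : δ → ι}

theorem eq_sum_repr_pivot_smul_of_mem_span
    (hechelon : ∀ i i', e.repr (v i) (pivot i') = if i = i' then 1 else 0)
    {w : V} (hw : w ∈ span R (Set.range v)) : w = ∑ k, e.repr w (pivot k) • v k := by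
  obtain ⟨c, rfl⟩ := (mem_span_range_iff_exists_fun R).mp hw
  have hcoef : ∀ k, e.repr (∑ i, c i • v i) (pivot k) = c k := fun k => by
    simp [map_sum, Finset.sum_apply', hechelon]
  simp_rw [hcoef]

theorem eq_of_mem_span_of_repr_pivot_eq
    (hechelon : ∀ i i', e.repr (v i) (pivot i') = if i = i' then 1 else 0)
    {w w' : V} (hw : w ∈ span R (Set.range v)) (hw' : w' ∈ span R (Set.range v))
    (h : ∀ k, e.repr w (pivot k) = e.repr w' (pivot k)) : w = w' := by
  rw [e.eq_sum_repr_pivot_smul_of_mem_span hechelon hw,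
    e.eq_sum_repr_pivot_smul_of_mem_span hechelon hw']
  simp_rw [h]

theorem mem_of_mem_iSup_span_inf
    (hM : iSupIndep M) (he : ∀ j, e j ∈ M (g j))
    (hechelon : ∀ i i', e.repr (v i) (pivot i') = if i = i' then 1 else 0) (i : δ)
    (hi : v i ∈ ⨆ r, span R (Set.range v) ⊓ M r) : v i ∈ M (g (pivot i)) := by
  obtain ⟨f, hf, hsum⟩ := (mem_iSup_iff_exists_finsupp _ _).mp hi
  have hfv : f (g (pivot i)) = v i := by
    refine e.eq_of_mem_span_of_repr_pivot_eq hechelon (hf _).1 (subset_span ⟨i, rfl⟩) fun k => ?_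
    by_cases hk : g (pivot k) = g (pivot i)
    · rw [← hk, ← hsum, e.repr_finsuppSum_apply_of_mem hM he f fun s => (hf s).2]
    · have hik : i ≠ k := fun h => hk (h ▸ rfl)
      rw [e.repr_eq_zero_of_mem_of_ne hM he (hf _).2 hk, hechelon, if_neg hik]
  exact hfv ▸ (hf _).2

end Echelon

end Module.Basis

theorem stmt_17_general {V : Type*} [AddCommGroup V] [Module ℂ V]
    (M : ℕ → Submodule ℂ V)
    (hindep : iSupIndep M)
    {ι : Type*} (e : Module.Basis ι ℂ V) (g : ι → ℕ) (he : ∀ j, e j ∈ M (g j))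
    {d : ℕ} (v : Fin d → V)
    (pivot : Fin d → ι)
    (hechelon : ∀ i i' : Fin d,
      e.repr (v i) (pivot i') = if i = i' then 1 else 0) :
    (Submodule.span ℂ (Set.range v) =
        ⨆ r : ℕ, (Submodule.span ℂ (Set.range v) ⊓ M r))
      ↔ (∀ i : Fin d, ∃ r : ℕ, v i ∈ M r) := by
  constructor
  · intro hgraded i
    have hi : v i ∈ ⨆ r, span ℂ (Set.range v) ⊓ M r := hgraded ▸ subset_span ⟨i, rfl⟩
    exact ⟨_, e.mem_of_mem_iSup_span_inf hindep he hechelon i hi⟩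
  · intro hhom
    refine le_antisymm (span_le.mpr ?_) (iSup_le fun r => inf_le_left)
    rintro _ ⟨i, rfl⟩
    obtain ⟨r, hr⟩ := hhom i
    exact mem_iSup_of_mem r ⟨subset_span ⟨i, rfl⟩, hr⟩

/-- If `span(v₁,…,v_d)` is a subrepresentation — i.e. it is the direct sum
of graded pieces `Nᵢ ⊆ Mᵢ` — then each `vᵢ` lies in a single graded piece `M_{t(i)}`;
conversely, if each `vᵢ` lies in some `M_t`, then the span is a subrepresentation. -/
theorem stmt_17 {V : Type*} [AddCommGroup V] [Module ℂ V]
    (M : ℕ → Submodule ℂ V)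
    (hindep : iSupIndep M) (htop : (⨆ r, M r) = ⊤)
    (φ : V →ₗ[ℂ] V) (hgrade : ∀ r : ℕ, (M r).map φ ≤ M (r + 1))
    {ι : Type*} (e : Module.Basis ι ℂ V) (g : ι → ℕ) (he : ∀ j, e j ∈ M (g j))
    (hJordan : ∀ j : ι, φ (e j) = 0 ∨ ∃ j' : ι, φ (e j) = e j')
    {d : ℕ} (v : Fin d → V)
    (hcell : ∀ i : Fin d, φ (v i) = 0 ∨ ∃ i' : Fin d, φ (v i) = v i')
    (pivot : Fin d → ι) (hpiv : Function.Injective pivot)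
    (hechelon : ∀ i i' : Fin d,
      e.repr (v i) (pivot i') = if i = i' then 1 else 0) :
    (Submodule.span ℂ (Set.range v) =
        ⨆ r : ℕ, (Submodule.span ℂ (Set.range v) ⊓ M r))
      ↔ (∀ i : Fin d, ∃ r : ℕ, v i ∈ M r) :=
  stmt_17_general M hindep e g he v pivot hechelon
end
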